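/- arXiv:2302.12884 — 2 statements merged into one kernel-verified Lean document; each statement's English description precedes it below -/
import Mathlib

section
/- Let W ∈ ℂ^{m×m}, and let Q₁, Q₂ : ℂ^n → ℂ^{m×n} be maps satisfying the intertwining property Q₁(x) y = Q₂(y) x for all x, y ∈ ℂ^n. Define E(v) = (Q₁(v)^H W Q₁(v) + Q₂(v)^H W Q₂(v)) / 2 for v ∈ ℂ^n. Then for all x, y ∈ ℂ^n one has x^H E(y) x = y^H E(x) y. -/
/-! Writing `⟪u⟫_W = uᴴ W u`, the quadratic form of `E y` at `x` is `(⟪Q₁(y) x⟫_W + ⟪Q₂(y) x⟫_W) / 2`;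
intertwining turns `Q₁(y) x` into `Q₂(x) y` and `Q₂(y) x` into `Q₁(x) y`, so exchanging `x` and `y`
only swaps the two summands. -/

open Matrix

theorem Matrix.star_dotProduct_conjTranspose_mul_mul_mulVec {l m R : Type*} [Fintype l]
    [Fintype m] [Semiring R] [StarRing R] (W : Matrix l l R) (A : Matrix l m R) (x : m → R) :
    star x ⬝ᵥ (Aᴴ * W * A) *ᵥ x = star (A *ᵥ x) ⬝ᵥ W *ᵥ (A *ᵥ x) := by
  rw [← mulVec_mulVec, ← mulVec_mulVec, dotProduct_mulVec, ← star_mulVec, dotProduct_mulVec,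
    dotProduct_mulVec]

/-- If `Q₁(x) y = Q₂(y) x` for all `x, y ∈ ℂ^n` and
`E(v) = (Q₁(v)ᴴ W Q₁(v) + Q₂(v)ᴴ W Q₂(v))/2`, then `xᴴ E(y) x = yᴴ E(x) y`. -/
theorem stmt_3 (m n : ℕ) (W : Matrix (Fin m) (Fin m) ℂ)
    (Q₁ Q₂ : (Fin n → ℂ) → Matrix (Fin m) (Fin n) ℂ)
    (hQ : ∀ x y : Fin n → ℂ, (Q₁ x).mulVec y = (Q₂ y).mulVec x)
    (E : (Fin n → ℂ) → Matrix (Fin n) (Fin n) ℂ)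
    (hE : ∀ v, E v = (2 : ℂ)⁻¹ • ((Q₁ v)ᴴ * W * Q₁ v + (Q₂ v)ᴴ * W * Q₂ v)) :
    ∀ x y : Fin n → ℂ, star x ⬝ᵥ (E y).mulVec x = star y ⬝ᵥ (E x).mulVec y := by
  intro x y
  simp only [hE, smul_mulVec, add_mulVec, dotProduct_smul, dotProduct_add,
    star_dotProduct_conjTranspose_mul_mul_mulVec]
  rw [hQ x y, hQ y x, add_comm]
end

section
/- Let G ∈ ℂ^{n×n} be Hermitian positive semidefinite, let s ∈ ℂ^n be a unimodular vector, and let s′ ∈ ℂ^n be any unimodular vector such that for every index j with (G s)_j ≠ 0, s′_j = (G s)_j / |(G s)_j|. Then s′^H G s′ ≥ s^H G s (both quadratic forms being real numbers). -/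
/-!
Put `t = G s`. Choosing `s'` aligned with `t` maximises `Re (s'ᴴ t)` over unimodular vectors, its
value being `∑ |t_j| ≥ Re (sᴴ t)`. Positive semidefiniteness of `G` gives
`0 ≤ (s' - s)ᴴ G (s' - s)`, i.e. `2 Re (s'ᴴ G s) ≤ sᴴ G s + s'ᴴ G s'`, so the gain in the linear
term carries over to the quadratic form.
-/

open Matrix RCLike
open scoped ComplexOrder

variable {𝕜 ι : Type*} [RCLike 𝕜] [Fintype ι]

namespace Matrix

lemma IsHermitian.star_dotProduct_mulVec_comm {G : Matrix ι ι 𝕜} (hG : G.IsHermitian)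
    (x y : ι → 𝕜) : star y ⬝ᵥ G *ᵥ x = star (star x ⬝ᵥ G *ᵥ y) := by
  rw [star_dotProduct, star_mulVec, hG.eq, ← dotProduct_mulVec]

lemma PosSemidef.two_mul_re_dotProduct_mulVec_le {G : Matrix ι ι 𝕜} (hG : G.PosSemidef)
    (x y : ι → 𝕜) :
    2 * re (star y ⬝ᵥ G *ᵥ x) ≤ re (star x ⬝ᵥ G *ᵥ x) + re (star y ⬝ᵥ G *ᵥ y) := by
  have hnonneg := hG.re_dotProduct_nonneg (y - x)
  have hsymm : re (star x ⬝ᵥ G *ᵥ y) = re (star y ⬝ᵥ G *ᵥ x) := by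
    rw [hG.isHermitian.star_dotProduct_mulVec_comm y x, star_def, conj_re]
  simp only [star_sub, mulVec_sub, sub_dotProduct, dotProduct_sub, map_sub] at hnonneg
  linarith

lemma PosSemidef.re_dotProduct_mulVec_self_le_of_le {G : Matrix ι ι 𝕜} (hG : G.PosSemidef)
    {x y : ι → 𝕜} (h : re (star x ⬝ᵥ G *ᵥ x) ≤ re (star y ⬝ᵥ G *ᵥ x)) :
    re (star x ⬝ᵥ G *ᵥ x) ≤ re (star y ⬝ᵥ G *ᵥ y) := by
  linarith [hG.two_mul_re_dotProduct_mulVec_le x y]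

end Matrix

lemma re_star_dotProduct_le_sum_norm {s : ι → 𝕜} (hs : ∀ j, ‖s j‖ ≤ 1) (t : ι → 𝕜) :
    re (star s ⬝ᵥ t) ≤ ∑ j, ‖t j‖ := by
  simp only [dotProduct, Pi.star_apply, map_sum]
  gcongr with j
  calc re (star (s j) * t j) ≤ ‖star (s j) * t j‖ := re_le_norm _
    _ = ‖s j‖ * ‖t j‖ := by rw [norm_mul, norm_star]
    _ ≤ ‖t j‖ := mul_le_of_le_one_left (norm_nonneg _) (hs j)

lemma re_star_dotProduct_eq_sum_norm {s t : ι → 𝕜} (hst : ∀ j, t j ≠ 0 → s j = t j / ‖t j‖) :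
    re (star s ⬝ᵥ t) = ∑ j, ‖t j‖ := by
  simp only [dotProduct, Pi.star_apply, map_sum]
  refine Finset.sum_congr rfl fun j _ => ?_
  rcases eq_or_ne (t j) 0 with h | h
  · simp [h]
  · have hnorm : (‖t j‖ : 𝕜) ≠ 0 := ofReal_ne_zero.mpr (norm_ne_zero_iff.mpr h)
    rw [hst j h, star_div₀, star_def, conj_ofReal, div_mul_eq_mul_div, RCLike.conj_mul, sq,
      mul_div_cancel_right₀ _ hnorm, ofReal_re]

theorem stmt_17_general (n : ℕ) (G : Matrix (Fin n) (Fin n) ℂ) (hG : G.PosSemidef)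
    (s s' : Fin n → ℂ)
    (hs : ∀ j, ‖s j‖ = 1)
    (halign : ∀ j, G.mulVec s j ≠ 0 →
      s' j = G.mulVec s j / (‖G.mulVec s j‖ : ℂ)) :
    (star s ⬝ᵥ G.mulVec s).re ≤ (star s' ⬝ᵥ G.mulVec s').re := by
  refine hG.re_dotProduct_mulVec_self_le_of_le ?_
  calc re (star s ⬝ᵥ G *ᵥ s) ≤ ∑ j, ‖(G *ᵥ s) j‖ :=
        re_star_dotProduct_le_sum_norm (fun j => (hs j).le) _
    _ = re (star s' ⬝ᵥ G *ᵥ s) := (re_star_dotProduct_eq_sum_norm halign).symm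

/-- Monotonicity of the power-method-like iteration: if `G` is Hermitian
positive semidefinite, `s` is unimodular, and `s′` is unimodular with
`s′_j = (G s)_j / |(G s)_j|` whenever `(G s)_j ≠ 0`, then `s′ᴴ G s′ ≥ sᴴ G s`. -/
theorem stmt_17 (n : ℕ) (G : Matrix (Fin n) (Fin n) ℂ) (hG : G.PosSemidef)
    (s s' : Fin n → ℂ)
    (hs : ∀ j, ‖s j‖ = 1) (hs' : ∀ j, ‖s' j‖ = 1)
    (halign : ∀ j, G.mulVec s j ≠ 0 →
      s' j = G.mulVec s j / (‖G.mulVec s j‖ : ℂ)) :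
    (star s ⬝ᵥ G.mulVec s).re ≤ (star s' ⬝ᵥ G.mulVec s').re :=
  stmt_17_general n G hG s s' hs halign
end
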